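/- arXiv:0811.4191 — 3 statements merged into one kernel-verified Lean document; each statement's English description precedes it below -/
import Mathlib

section
/- (Theorem 2) For any fixed SNR > 0 and any ε ∈ (0, 1/2), the H-ARQ rate converges to the ergodic capacity as the maximum number of rounds grows: lim_{M→∞} C_ε^{IR,M}(SNR) = μ(SNR). -/
/-!
By the law of large numbers the normalized accumulated information
`(1/n) Σ_{i<n} log₂(1 + SNR·Hᵢ)` converges in probability to `μ(SNR) > 0`. Hence its
`ε`-quantile `C_ε^M` tends to `μ(SNR)`, and for every `t < 1` the information gathered in the
first `⌊tM⌋` rounds stays, with probability tending to one, below the initial rate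
`M·C_ε^M ≈ M·μ(SNR)`; then more than `⌊tM⌋` rounds are needed. Together with `X ≤ M` this gives
`E[X]/M → 1`, and the H-ARQ rate `M·C_ε^M / E[X] = C_ε^M / (E[X]/M)` tends to `μ(SNR)`.
-/

open MeasureTheory ProbabilityTheory Real Filter Topology

/-- Number of IR H-ARQ rounds: `X(R, SNR) = min(M, min{m ≥ 1 : Σ_{i=1}^m log₂(1+SNR·Hᵢ) > R})`
(realized as the infimum of `{M} ∪ {m ≥ 1 : accumulated mutual information exceeds R}`). -/
noncomputable def numRounds {Ω : Type*} (H : ℕ → Ω → ℝ) (M : ℕ) (snr R : ℝ) (ω : Ω) : ℕ :=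
  sInf ({M} ∪ {m | 1 ≤ m ∧ R < ∑ i ∈ Finset.range m, Real.logb 2 (1 + snr * H i ω)})

section Gamma

lemma gammaMeasure_Iio_zero (a r : ℝ) : gammaMeasure a r (Set.Iio 0) = 0 := by
  rw [gammaMeasure, withDensity_apply _ measurableSet_Iio]
  exact lintegral_gammaPDF_of_nonpos le_rfl

lemma ae_nonneg_gammaMeasure (a r : ℝ) : ∀ᵐ x ∂gammaMeasure a r, 0 ≤ x := by
  rw [ae_iff]
  simp only [not_le]
  exact gammaMeasure_Iio_zero a r

lemma integrable_id_gammaMeasure {a r : ℝ} (ha : 0 < a) (hr : 0 < r) :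
    Integrable id (gammaMeasure a r) := by
  rw [gammaMeasure, integrable_withDensity_iff (f := gammaPDF a r)
    (measurable_gammaPDFReal a r).ennreal_ofReal
    (ae_of_all _ fun _ => ENNReal.ofReal_lt_top), ← integrableOn_univ, ← Set.Iio_union_Ici (a := 0),
    integrableOn_union, integrableOn_Ici_iff_integrableOn_Ioi]
  constructor
  · refine integrableOn_zero.congr_fun (fun x hx => ?_) measurableSet_Iio
    simp [gammaPDF_of_neg (Set.mem_Iio.1 hx)]
  · refine IntegrableOn.congr_fun ((integrableOn_rpow_mul_exp_neg_mul_rpow (s := a) (by linarith)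
      one_pos hr).const_mul (r ^ a / Gamma a)) (fun x (hx : 0 < x) => ?_) measurableSet_Ioi
    rw [gammaPDF, ENNReal.toReal_ofReal (gammaPDFReal_nonneg ha hr x), gammaPDFReal,
      if_pos hx.le, Real.rpow_sub_one hx.ne', Real.rpow_one, id]
    field_simp

end Gamma

section LogOnePlus

variable {snr x : ℝ}

lemma logb_one_add_mul_nonneg (hsnr : 0 ≤ snr) (hx : 0 ≤ x) : 0 ≤ logb 2 (1 + snr * x) :=
  logb_nonneg one_lt_two (by nlinarith)

lemma logb_one_add_mul_le (hsnr : 0 ≤ snr) (hx : 0 ≤ x) :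
    logb 2 (1 + snr * x) ≤ snr / log 2 * x := by
  have := log_le_sub_one_of_pos (show 0 < 1 + snr * x by nlinarith)
  rw [logb, div_mul_eq_mul_div]
  exact div_le_div_of_nonneg_right (by linarith) (log_pos one_lt_two).le

lemma measurable_logb_one_add_mul (snr : ℝ) : Measurable fun x : ℝ => logb 2 (1 + snr * x) :=
  (measurable_const.add (measurable_id.const_mul snr)).log.div_const _

lemma integrable_logb_one_add_mul_gammaMeasure {a r : ℝ} (ha : 0 < a) (hr : 0 < r)
    (hsnr : 0 ≤ snr) : Integrable (fun x => logb 2 (1 + snr * x)) (gammaMeasure a r) := by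
  refine ((integrable_id_gammaMeasure ha hr).const_mul (snr / log 2)).mono'
    (measurable_logb_one_add_mul snr).aestronglyMeasurable ?_
  filter_upwards [ae_nonneg_gammaMeasure a r] with x hx
  rw [norm_of_nonneg (logb_one_add_mul_nonneg hsnr hx)]
  exact logb_one_add_mul_le hsnr hx

end LogOnePlus

section ConvergenceInMeasure

variable {ι α : Type*} {_ : MeasurableSpace α} {μ : Measure α} {l : Filter ι} {Z : ι → α → ℝ}
  {m a : ℝ}

lemma one_sub_measureReal_le_measureReal_compl [IsProbabilityMeasure μ] (s : Set α) :
    1 - μ.real s ≤ μ.real sᶜ := by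
  have := measureReal_union_le (μ := μ) s sᶜ
  rw [Set.union_compl_self, probReal_univ] at this
  linarith

lemma MeasureTheory.TendstoInMeasure.tendsto_measureReal_le_of_lt [IsFiniteMeasure μ]
    (h : TendstoInMeasure μ Z l fun _ => m) (ha : a < m) :
    Tendsto (fun i => μ.real {x | Z i x ≤ a}) l (𝓝 0) := by
  refine squeeze_zero (fun _ => measureReal_nonneg)
    (fun i => measureReal_mono fun x (hx : Z i x ≤ a) => ?_)
    (tendstoInMeasure_iff_measureReal_dist.1 h (m - a) (sub_pos.2 ha))
  show m - a ≤ dist (Z i x) m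
  rw [dist_comm, Real.dist_eq]
  exact (sub_le_sub_left hx m).trans (le_abs_self _)

lemma MeasureTheory.TendstoInMeasure.tendsto_measureReal_ge_of_gt [IsFiniteMeasure μ]
    (h : TendstoInMeasure μ Z l fun _ => m) (ha : m < a) :
    Tendsto (fun i => μ.real {x | a ≤ Z i x}) l (𝓝 0) := by
  refine squeeze_zero (fun _ => measureReal_nonneg)
    (fun i => measureReal_mono fun x (hx : a ≤ Z i x) => ?_)
    (tendstoInMeasure_iff_measureReal_dist.1 h (a - m) (sub_pos.2 ha))
  show a - m ≤ dist (Z i x) m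
  rw [Real.dist_eq]
  exact (sub_le_sub_right hx m).trans (le_abs_self _)

lemma MeasureTheory.TendstoInMeasure.tendsto_of_measureReal_le_eq [IsProbabilityMeasure μ]
    {c : ι → ℝ} {ε : ℝ} (h : TendstoInMeasure μ Z l fun _ => m) (hε : ε ∈ Set.Ioo 0 1)
    (hc : ∀ᶠ i in l, μ.real {x | Z i x ≤ c i} = ε) : Tendsto c l (𝓝 m) := by
  refine tendsto_order.2 ⟨fun a ha => ?_, fun a ha => ?_⟩
  · filter_upwards [hc, (h.tendsto_measureReal_le_of_lt ha).eventually (gt_mem_nhds hε.1)]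
      with i hci hsmall
    by_contra! hle
    have : μ.real {x | Z i x ≤ c i} ≤ μ.real {x | Z i x ≤ a} :=
      measureReal_mono fun x (hx : Z i x ≤ c i) => hx.trans hle
    linarith
  · filter_upwards [hc, (h.tendsto_measureReal_ge_of_gt ha).eventually
      (gt_mem_nhds (sub_pos.2 hε.2))] with i hci hsmall
    by_contra! hle
    have : μ.real {x | Z i x ≤ c i}ᶜ ≤ μ.real {x | a ≤ Z i x} :=
      measureReal_mono fun x (hx : ¬ Z i x ≤ c i) => hle.trans (not_le.1 hx).le
    linarith [one_sub_measureReal_le_measureReal_compl (μ := μ) {x | Z i x ≤ c i}]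

end ConvergenceInMeasure

lemma integral_pos_of_measureReal_le_lt_one {Ω : Type*} [MeasurableSpace Ω] {μ : Measure Ω}
    [IsProbabilityMeasure μ] {Y : Ω → ℝ} {c : ℝ} (hY : 0 ≤ᵐ[μ] Y) (hint : Integrable Y μ)
    (hc : 0 < c) (h : μ.real {ω | Y ω ≤ c} < 1) : 0 < ∫ ω, Y ω ∂μ := by
  have hcompl : μ.real {ω | Y ω ≤ c}ᶜ ≤ μ.real {ω | c ≤ Y ω} :=
    measureReal_mono fun ω (hω : ¬ Y ω ≤ c) => (not_le.1 hω).le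
  have := one_sub_measureReal_le_measureReal_compl (μ := μ) {ω | Y ω ≤ c}
  calc 0 < c * μ.real {ω | c ≤ Y ω} := mul_pos hc (by linarith)
    _ ≤ ∫ ω, Y ω ∂μ := mul_meas_ge_le_integral_of_nonneg hY hint c

theorem weak_law_tendstoInMeasure {Ω : Type*} [MeasurableSpace Ω] {μ : Measure Ω}
    [IsProbabilityMeasure μ] (Y : ℕ → Ω → ℝ) (hint : Integrable (Y 0) μ)
    (hindep : Pairwise fun i j => IndepFun (Y i) (Y j) μ)
    (hident : ∀ i, IdentDistrib (Y i) (Y 0) μ μ) :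
    TendstoInMeasure μ (fun (n : ℕ) ω => (n : ℝ)⁻¹ * ∑ i ∈ Finset.range n, Y i ω) atTop
      fun _ => ∫ ω, Y 0 ω ∂μ :=
  tendstoInMeasure_of_tendsto_ae
    (fun _ => (Finset.aestronglyMeasurable_fun_sum _ fun i _ =>
      (hident i).aemeasurable_fst.aestronglyMeasurable).const_mul _)
    (strong_law_ae Y hint hindep hident)

section NumRounds

variable {Ω : Type*} {H : ℕ → Ω → ℝ} {M n k : ℕ} {snr R : ℝ} {ω : Ω}

noncomputable def accumulatedInfo (H : ℕ → Ω → ℝ) (snr : ℝ) (n : ℕ) (ω : Ω) : ℝ :=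
  ∑ i ∈ Finset.range n, logb 2 (1 + snr * H i ω)

lemma accumulatedInfo_mono (hsnr : 0 ≤ snr) (hH : ∀ i, 0 ≤ H i ω) :
    Monotone fun n => accumulatedInfo H snr n ω := fun _ _ hmn =>
  Finset.sum_le_sum_of_subset_of_nonneg (Finset.range_subset_range.2 hmn)
    fun i _ _ => logb_one_add_mul_nonneg hsnr (hH i)

lemma measurable_accumulatedInfo [MeasurableSpace Ω] (hmeas : ∀ i, Measurable (H i)) (n : ℕ) :
    Measurable (accumulatedInfo H snr n) :=
  Finset.measurable_fun_sum _ fun i _ => (measurable_logb_one_add_mul snr).comp (hmeas i)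

lemma numRounds_le : numRounds H M snr R ω ≤ M :=
  Nat.sInf_le (Or.inl rfl)

lemma numRounds_le_iff : numRounds H M snr R ω ≤ n ↔
    M ≤ n ∨ ∃ j ∈ Finset.Icc 1 n, R < accumulatedInfo H snr j ω := by
  constructor
  · intro h
    rcases Nat.sInf_mem (s := {M} ∪ {m | 1 ≤ m ∧ R < accumulatedInfo H snr m ω})
      ⟨M, Or.inl rfl⟩ with hM | ⟨hj1, hjR⟩
    · exact Or.inl (hM ▸ h)
    · exact Or.inr ⟨_, Finset.mem_Icc.2 ⟨hj1, h⟩, hjR⟩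
  · rintro (hM | ⟨j, hj, hjR⟩)
    · exact numRounds_le.trans hM
    · exact (Nat.sInf_le (Or.inr ⟨(Finset.mem_Icc.1 hj).1, hjR⟩)).trans (Finset.mem_Icc.1 hj).2

lemma lt_numRounds (hsnr : 0 ≤ snr) (hH : ∀ i, 0 ≤ H i ω) (hk : k < M)
    (hR : accumulatedInfo H snr k ω ≤ R) : k < numRounds H M snr R ω := by
  by_contra! hle
  rcases numRounds_le_iff.1 hle with hM | ⟨j, hj, hjR⟩
  · omega
  · exact (hjR.trans_le ((accumulatedInfo_mono hsnr hH (Finset.mem_Icc.1 hj).2).trans hR)).false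

lemma measurable_numRounds [MeasurableSpace Ω] (hmeas : ∀ i, Measurable (H i)) :
    Measurable (numRounds H M snr R) := by
  refine measurable_of_Iic fun n => ?_
  have : numRounds H M snr R ⁻¹' Set.Iic n =
      {_ω | M ≤ n} ∪ ⋃ j ∈ Finset.Icc 1 n, {ω | R < accumulatedInfo H snr j ω} := by
    ext ω
    simp [numRounds_le_iff]
  rw [this]
  exact (MeasurableSet.const _).union (Finset.measurableSet_biUnion _ fun j _ =>
    measurableSet_lt measurable_const (measurable_accumulatedInfo hmeas j))

variable [MeasurableSpace Ω] {μ : Measure Ω} [IsProbabilityMeasure μ]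

lemma integral_numRounds_le : ∫ ω, (numRounds H M snr R ω : ℝ) ∂μ ≤ M := by
  simpa using integral_mono_of_nonneg (ae_of_all _ fun ω => Nat.cast_nonneg _)
    (integrable_const (μ := μ) (M : ℝ)) (ae_of_all _ fun ω => Nat.cast_le.2 (numRounds_le (ω := ω)))

lemma mul_measureReal_le_integral_numRounds (hmeas : ∀ i, Measurable (H i)) (hsnr : 0 ≤ snr)
    (hH : ∀ᵐ ω ∂μ, ∀ i, 0 ≤ H i ω) (hk : k < M) :
    (k + 1) * μ.real {ω | accumulatedInfo H snr k ω ≤ R} ≤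
      ∫ ω, (numRounds H M snr R ω : ℝ) ∂μ := by
  have hint : Integrable (fun ω => (numRounds H M snr R ω : ℝ)) μ :=
    .of_bound (measurable_from_nat.comp (measurable_numRounds hmeas)).aestronglyMeasurable M
      (ae_of_all _ fun ω => by simpa using numRounds_le (ω := ω))
  have hsub : {ω | accumulatedInfo H snr k ω ≤ R} ≤ᵐ[μ]
      {ω | (k + 1 : ℝ) ≤ numRounds H M snr R ω} := by
    filter_upwards [hH] with ω hω hR
    exact_mod_cast lt_numRounds hsnr hω hk hR
  calc (k + 1) * μ.real {ω | accumulatedInfo H snr k ω ≤ R}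
      ≤ (k + 1) * μ.real {ω | (k + 1 : ℝ) ≤ numRounds H M snr R ω} :=
        mul_le_mul_of_nonneg_left
          (ENNReal.toReal_mono (measure_ne_top _ _) (measure_mono_ae hsub)) (by positivity)
    _ ≤ _ := mul_meas_ge_le_integral_of_nonneg (ae_of_all _ fun _ => Nat.cast_nonneg _) hint _

end NumRounds

section RoundsAsymptotics

variable {Ω : Type*} [MeasurableSpace Ω] {μ : Measure Ω} [IsProbabilityMeasure μ]
  {H : ℕ → Ω → ℝ} {snr m t : ℝ} {C : ℕ → ℝ}

lemma tendsto_measureReal_accumulatedInfo_floor_le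
    (hlaw : TendstoInMeasure μ (fun (n : ℕ) ω => (n : ℝ)⁻¹ * accumulatedInfo H snr n ω) atTop
      fun _ => m)
    (hm : 0 < m) (hC : Tendsto C atTop (𝓝 m)) (ht0 : 0 < t) (ht1 : t < 1) :
    Tendsto (fun M : ℕ => μ.real {ω | accumulatedInfo H snr ⌊t * M⌋₊ ω ≤ M * C M}) atTop
      (𝓝 1) := by
  -- with `m < b < m / t`, the averaged information after `⌊tM⌋` rounds is likely below `b`,
  -- and `⌊tM⌋ · b ≤ t b M < M · C M` once `C M` is close to `m`
  obtain ⟨b, hmb, hbm⟩ : ∃ b, m < b ∧ b < m / t :=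
    exists_between ((lt_div_iff₀ ht0).2 (mul_lt_of_lt_one_right hm ht1))
  have hb : 0 < b := hm.trans hmb
  have hk : Tendsto (fun M : ℕ => ⌊t * M⌋₊) atTop atTop :=
    tendsto_nat_floor_atTop.comp (tendsto_natCast_atTop_atTop.const_mul_atTop ht0)
  have htail := (hlaw.tendsto_measureReal_ge_of_gt hmb).comp hk
  have hlower : ∀ᶠ M : ℕ in atTop,
      1 - μ.real {ω | b ≤ (⌊t * M⌋₊ : ℝ)⁻¹ * accumulatedInfo H snr ⌊t * M⌋₊ ω} ≤
        μ.real {ω | accumulatedInfo H snr ⌊t * M⌋₊ ω ≤ M * C M} := by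
    filter_upwards [hC.eventually (lt_mem_nhds ((lt_div_iff₀' ht0).1 hbm)),
      hk.eventually_ge_atTop 1] with M hCM hk1
    refine (one_sub_measureReal_le_measureReal_compl _).trans (measureReal_mono fun ω hω => ?_)
    have hkpos : (0 : ℝ) < ⌊t * M⌋₊ := by exact_mod_cast hk1
    calc accumulatedInfo H snr ⌊t * M⌋₊ ω ≤ ⌊t * M⌋₊ * b :=
          ((inv_mul_lt_iff₀ hkpos).1 (not_le.1 hω)).le
      _ ≤ t * M * b := by gcongr; exact Nat.floor_le (by positivity)
      _ ≤ M * C M := by nlinarith [(M.cast_nonneg : (0 : ℝ) ≤ M)]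
  refine tendsto_of_tendsto_of_tendsto_of_le_of_le' ?_ tendsto_const_nhds hlower
    (Eventually.of_forall fun _ => measureReal_le_one)
  simpa using tendsto_const_nhds.sub htail

theorem tendsto_integral_numRounds_div (hmeas : ∀ i, Measurable (H i)) (hsnr : 0 ≤ snr)
    (hH : ∀ᵐ ω ∂μ, ∀ i, 0 ≤ H i ω)
    (hlaw : TendstoInMeasure μ (fun (n : ℕ) ω => (n : ℝ)⁻¹ * accumulatedInfo H snr n ω) atTop
      fun _ => m)
    (hm : 0 < m) (hC : Tendsto C atTop (𝓝 m)) :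
    Tendsto (fun M : ℕ => (∫ ω, (numRounds H M snr (M * C M) ω : ℝ) ∂μ) / M) atTop (𝓝 1) := by
  refine tendsto_order.2 ⟨fun a ha => ?_, fun a ha => Eventually.of_forall fun M =>
    (div_le_one_of_le₀ integral_numRounds_le M.cast_nonneg).trans_lt ha⟩
  obtain ⟨t, hat, ht1⟩ := exists_between (max_lt ha one_pos)
  have ht0 : 0 < t := (le_max_right a 0).trans_lt hat
  have hp := ((tendsto_measureReal_accumulatedInfo_floor_le hlaw hm hC ht0 ht1).const_mul
    t).eventually (lt_mem_nhds (by simpa using (le_max_left a 0).trans_lt hat))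
  filter_upwards [hp, eventually_gt_atTop 0] with M hpM hM
  have hMpos : (0 : ℝ) < M := by exact_mod_cast hM
  have hkM : ⌊t * M⌋₊ < M := (Nat.floor_lt (by positivity)).2 (by nlinarith)
  calc a < t * μ.real {ω | accumulatedInfo H snr ⌊t * M⌋₊ ω ≤ M * C M} := hpM
    _ ≤ (⌊t * M⌋₊ + 1) / M * μ.real {ω | accumulatedInfo H snr ⌊t * M⌋₊ ω ≤ M * C M} := by
        gcongr
        rw [le_div_iff₀ hMpos]
        exact (Nat.lt_floor_add_one _).le
    _ ≤ (∫ ω, (numRounds H M snr (M * C M) ω : ℝ) ∂μ) / M := by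
        rw [div_mul_eq_mul_div]
        gcongr
        exact mul_measureReal_le_integral_numRounds hmeas hsnr hH hkM

end RoundsAsymptotics

/-- Theorem 2: for fixed `SNR > 0` and `ε ∈ (0, 1/2)`, the H-ARQ rate
`C_ε^{IR,M}(SNR) = M·C_ε^M(SNR) / E[X(M·C_ε^M(SNR), SNR)]` converges to the ergodic capacity
`μ(SNR)` as `M → ∞`. -/
theorem harq_rate_tendsto_ergodic
    {Ω : Type*} [MeasurableSpace Ω] (μ : Measure Ω) [IsProbabilityMeasure μ]
    (H : ℕ → Ω → ℝ) (hmeas : ∀ i, Measurable (H i))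
    (hindep : iIndepFun H μ)
    (hdist : ∀ i, Measure.map (H i) μ = expMeasure 1)
    (snr : ℝ) (hsnr : 0 < snr) (ε : ℝ) (hε : ε ∈ Set.Ioo (0:ℝ) (1/2))
    (C : ℕ → ℝ)
    (hC : ∀ M, 1 ≤ M → 0 < C M ∧
      (μ {ω | (1 / (M:ℝ)) * ∑ i ∈ Finset.range M,
          Real.logb 2 (1 + snr * H i ω) ≤ C M}).toReal = ε) :
    Tendsto
      (fun M : ℕ =>
        ((M : ℝ) * C M) / ∫ ω, (numRounds H M snr ((M : ℝ) * C M) ω : ℝ) ∂μ)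
      atTop (𝓝 (∫ ω, Real.logb 2 (1 + snr * H 0 ω) ∂μ)) := by
  have hf := measurable_logb_one_add_mul snr
  have hH : ∀ᵐ ω ∂μ, ∀ i, 0 ≤ H i ω := ae_all_iff.2 fun i =>
    ae_of_ae_map (hmeas i).aemeasurable (hdist i ▸ ae_nonneg_gammaMeasure 1 1)
  have hint : Integrable (fun ω => logb 2 (1 + snr * H 0 ω)) μ :=
    (integrable_map_measure hf.aestronglyMeasurable (hmeas 0).aemeasurable).1
      (hdist 0 ▸ integrable_logb_one_add_mul_gammaMeasure one_pos one_pos hsnr.le)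
  have hlaw : TendstoInMeasure μ (fun (n : ℕ) ω => (n : ℝ)⁻¹ * accumulatedInfo H snr n ω) atTop
      fun _ => ∫ ω, logb 2 (1 + snr * H 0 ω) ∂μ :=
    weak_law_tendstoInMeasure (fun i ω => logb 2 (1 + snr * H i ω)) hint
      (fun i j hij => (hindep.comp _ fun _ => hf).indepFun hij) fun i =>
        (IdentDistrib.mk (hmeas i).aemeasurable (hmeas 0).aemeasurable
          (by rw [hdist i, hdist 0])).comp hf
  have hCm : Tendsto C atTop (𝓝 (∫ ω, logb 2 (1 + snr * H 0 ω) ∂μ)) :=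
    hlaw.tendsto_of_measureReal_le_eq ⟨hε.1, by linarith [hε.2]⟩
      ((eventually_ge_atTop 1).mono fun M hM => by rw [← one_div]; exact (hC M hM).2)
  have hm : 0 < ∫ ω, logb 2 (1 + snr * H 0 ω) ∂μ := by
    have hq := (hC 1 le_rfl).2
    simp only [Nat.cast_one, div_one, one_mul, Finset.sum_range_one] at hq
    exact integral_pos_of_measureReal_le_lt_one
      (hH.mono fun ω hω => logb_one_add_mul_nonneg hsnr.le (hω 0)) hint (hC 1 le_rfl).1
      (hq.trans_lt (by linarith [hε.2]))
  have hrate := hCm.div (tendsto_integral_numRounds_div hmeas hsnr.le hH hlaw hm hCm) one_ne_zero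
  rw [div_one] at hrate
  refine hrate.congr fun M => ?_
  rw [Pi.div_apply, div_div_eq_mul_div, mul_comm]
end

section
/- For every SNR > 0, every positive integer k, and every R > 0, the accumulated mutual information satisfies the lower bound P[ Σ_{i=1}^{k} log₂(1 + SNR·H_i) ≤ R ] ≥ ( 1 − exp( −(2^{R/k} − 1)/SNR ) )^k. -/
/-!
If every fading gain satisfies `Hᵢ ≤ (2^{R/k} - 1)/SNR`, then every summand
`log₂(1 + SNR·Hᵢ)` is at most `R/k`, so the accumulated mutual information is at most `R`.
By independence the probability of this intersection of events is the `k`-th power of the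
exponential distribution function at `(2^{R/k} - 1)/SNR`.
-/

open MeasureTheory ProbabilityTheory Real Filter Topology

lemma expMeasure_Icc_zero {r c : ℝ} (hr : 0 < r) (hc : 0 ≤ c) :
    expMeasure r (Set.Icc 0 c) = ENNReal.ofReal (1 - exp (-(r * c))) := by
  have h := lintegral_exponentialPDF_eq_antiDeriv hr c
  rw [if_pos hc, lintegral_Iic_eq_lintegral_Iio_add_Icc _ hc,
    lintegral_exponentialPDF_of_nonpos le_rfl, zero_add] at h
  exact (withDensity_apply _ measurableSet_Icc).trans h

lemma ProbabilityTheory.iIndepFun.measure_biInter_preimage_eq_pow {Ω ι β : Type*}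
    [MeasurableSpace Ω] [MeasurableSpace β] {μ : Measure Ω} {ν : Measure β} {X : ι → Ω → β}
    (hindep : iIndepFun X μ) (hmeas : ∀ i, Measurable (X i)) (hlaw : ∀ i, μ.map (X i) = ν)
    (s : Finset ι) {A : Set β} (hA : MeasurableSet A) :
    μ (⋂ i ∈ s, X i ⁻¹' A) = ν A ^ s.card := by
  rw [hindep.meas_biInter fun i _ ↦ ⟨A, hA, rfl⟩, Finset.prod_congr rfl fun i _ ↦
    (hlaw i ▸ Measure.map_apply (hmeas i) hA).symm, Finset.prod_const]

lemma logb_one_add_mul_le_s12 {b a c x : ℝ} (hb : 1 < b) (hc : 0 < c) (hx : 0 ≤ x)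
    (hxa : x ≤ (b ^ a - 1) / c) : logb b (1 + c * x) ≤ a := by
  rw [logb_le_iff_le_rpow hb (by positivity)]
  rw [le_div_iff₀ hc] at hxa
  linarith

lemma sum_logb_one_add_mul_le {ι : Type*} {s : Finset ι} {b c R : ℝ} {x : ι → ℝ}
    (hb : 1 < b) (hc : 0 < c) (hR : 0 ≤ R)
    (hx : ∀ i ∈ s, x i ∈ Set.Icc 0 ((b ^ (R / s.card) - 1) / c)) :
    ∑ i ∈ s, logb b (1 + c * x i) ≤ R :=
  calc ∑ i ∈ s, logb b (1 + c * x i)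
      ≤ ∑ _i ∈ s, R / s.card :=
        Finset.sum_le_sum fun i hi ↦ logb_one_add_mul_le_s12 hb hc (hx i hi).1 (hx i hi).2
    _ = s.card * (R / s.card) := by rw [Finset.sum_const, nsmul_eq_mul]
    _ ≤ R := by
      rcases eq_or_ne (s.card : ℝ) 0 with h | h
      · simpa [h] using hR
      · rw [mul_div_cancel₀ _ h]

theorem accumulated_mutual_info_prob_lower_bound_general
    {Ω : Type*} [MeasurableSpace Ω] (μ : Measure Ω) [IsProbabilityMeasure μ]
    (H : ℕ → Ω → ℝ) (hmeas : ∀ i, Measurable (H i))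
    (hindep : iIndepFun H μ)
    (hdist : ∀ i, Measure.map (H i) μ = expMeasure 1)
    (snr : ℝ) (hsnr : 0 < snr) (k : ℕ) (R : ℝ) (hR : 0 < R) :
    (1 - Real.exp (-(((2:ℝ) ^ (R / (k:ℝ)) - 1) / snr))) ^ k ≤
      (μ {ω | ∑ i ∈ Finset.range k, Real.logb 2 (1 + snr * H i ω) ≤ R}).toReal := by
  set t := ((2:ℝ) ^ (R / k) - 1) / snr
  have ht : 0 ≤ t := div_nonneg (sub_nonneg.2 (one_le_rpow one_le_two (by positivity))) hsnr.le
  have hsub : (⋂ i ∈ Finset.range k, H i ⁻¹' Set.Icc 0 t) ⊆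
      {ω | ∑ i ∈ Finset.range k, logb 2 (1 + snr * H i ω) ≤ R} := fun ω hω ↦
    sum_logb_one_add_mul_le one_lt_two hsnr hR.le (by simpa [t] using hω)
  calc (1 - exp (-t)) ^ k = (μ (⋂ i ∈ Finset.range k, H i ⁻¹' Set.Icc 0 t)).toReal := by
        rw [hindep.measure_biInter_preimage_eq_pow hmeas hdist _ measurableSet_Icc,
          expMeasure_Icc_zero one_pos ht, one_mul, Finset.card_range, ENNReal.toReal_pow,
          ENNReal.toReal_ofReal (sub_nonneg.2 (exp_le_one_iff.2 (neg_nonpos.2 ht)))]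
    _ ≤ _ := ENNReal.toReal_mono (measure_ne_top _ _) (measure_mono hsub)

/-- lower bound on the outage probability of the accumulated mutual information:
`P[Σ_{i=1}^k log₂(1+SNR·Hᵢ) ≤ R] ≥ (1 − exp(−(2^{R/k} − 1)/SNR))^k`. -/
theorem accumulated_mutual_info_prob_lower_bound
    {Ω : Type*} [MeasurableSpace Ω] (μ : Measure Ω) [IsProbabilityMeasure μ]
    (H : ℕ → Ω → ℝ) (hmeas : ∀ i, Measurable (H i))
    (hindep : iIndepFun H μ)
    (hdist : ∀ i, Measure.map (H i) μ = expMeasure 1)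
    (snr : ℝ) (hsnr : 0 < snr) (k : ℕ) (hk : 1 ≤ k) (R : ℝ) (hR : 0 < R) :
    (1 - Real.exp (-(((2:ℝ) ^ (R / (k:ℝ)) - 1) / snr))) ^ k ≤
      (μ {ω | ∑ i ∈ Finset.range k, Real.logb 2 (1 + snr * H i ω) ≤ R}).toReal :=
  accumulated_mutual_info_prob_lower_bound_general μ H hmeas hindep hdist snr hsnr k R hR
end

section
/- For every positive integer r and every real constant c, lim_{SNR→∞} P[ Σ_{i=1}^{r} log₂(1 + SNR·H_i) ≤ r·log₂(SNR) + c ] = P[ Σ_{i=1}^{r} log₂(H_i) ≤ c ], and the limiting probability is strictly between 0 and 1 since the support of Σ_{i=1}^{r} log₂(H_i) is the whole real line. -/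
open MeasureTheory ProbabilityTheory Real Filter Topology Set

/-! For `x > 0` and `h > 0`, `log₂ (1 + x h) = log₂ x + log₂ (x⁻¹ + h)`, so the shifted outage
event is `{∑ᵢ log₂ (x⁻¹ + Hᵢ) ≤ c}`, and `∑ᵢ log₂ (x⁻¹ + Hᵢ) → ∑ᵢ log₂ Hᵢ` pointwise. Hence the
indicators converge off the event `{∑ᵢ log₂ Hᵢ = c}`, which is null because `log₂ Hᵢ` is
atomless and independent of the other summands; dominated convergence gives the limit.
The limit lies strictly between `0` and `1` because each `Hᵢ` falls into any interval of
`(0, ∞)` with positive probability, independently, which forces `∑ᵢ log₂ Hᵢ` below or above `c`. -/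

section Deterministic

variable {ι : Type*} {b : ℝ}

lemma Finset.sum_const_div_card {s : Finset ι} (hs : s.Nonempty) (c : ℝ) :
    ∑ _i ∈ s, c / s.card = c := by
  rw [Finset.sum_const, nsmul_eq_mul]
  field_simp [hs.card_pos.ne']

lemma logb_one_add_mul_eq {x y : ℝ} (hx : 0 < x) (hy : 0 ≤ y) :
    logb b (1 + x * y) = logb b x + logb b (x⁻¹ + y) := by
  rw [← logb_mul hx.ne' (by positivity), mul_add, mul_inv_cancel₀ hx.ne']

lemma tendsto_sum_logb_one_add_mul_sub (s : Finset ι) {h : ι → ℝ} (hh : ∀ i ∈ s, 0 < h i) :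
    Tendsto (fun x => ∑ i ∈ s, logb b (1 + x * h i) - s.card * logb b x) atTop
      (𝓝 (∑ i ∈ s, logb b (h i))) := by
  have hlim : Tendsto (fun x : ℝ => ∑ i ∈ s, logb b (x⁻¹ + h i)) atTop
      (𝓝 (∑ i ∈ s, logb b (h i))) :=
    tendsto_finsetSum _ fun i hi => (continuousAt_logb (hh i hi).ne').tendsto.comp
      (by simpa using tendsto_inv_atTop_zero.add_const (h i))
  refine hlim.congr' ?_
  filter_upwards [eventually_gt_atTop 0] with x hx
  rw [Finset.sum_congr rfl fun i hi => logb_one_add_mul_eq hx (hh i hi).le,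
    Finset.sum_add_distrib, Finset.sum_const, nsmul_eq_mul, add_sub_cancel_left]

lemma eventually_sum_logb_one_add_mul_le_iff (s : Finset ι) {h : ι → ℝ}
    (hh : ∀ i ∈ s, 0 < h i) {c : ℝ} (hc : ∑ i ∈ s, logb b (h i) ≠ c) :
    ∀ᶠ x in atTop, (∑ i ∈ s, logb b (1 + x * h i) ≤ s.card * logb b x + c ↔
      ∑ i ∈ s, logb b (h i) ≤ c) := by
  have hlim := tendsto_sum_logb_one_add_mul_sub (b := b) s hh
  rcases hc.lt_or_gt with hlt | hgt
  · filter_upwards [hlim.eventually_lt_const hlt] with x hx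
    exact iff_of_true (by linarith) hlt.le
  · filter_upwards [hlim.eventually_const_lt hgt] with x hx
    exact iff_of_false (by linarith) hgt.not_ge

lemma logb_preimage_singleton_subset (hb₀ : 0 < b) (hb₁ : b ≠ 1) (t : ℝ) :
    logb b ⁻¹' {t} ⊆ {0, b ^ t, -b ^ t} := by
  intro x hx
  rcases eq_or_ne x 0 with h0 | h0
  · exact Or.inl h0
  · have habs : |x| = b ^ t := by rw [← hx, rpow_logb_eq_abs hb₀ hb₁ h0]
    exact Or.inr ((abs_eq (by positivity)).1 habs)

end Deterministic

section Exponential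

instance (θ : ℝ) : NullSingletonClass (expMeasure θ) := by
  unfold expMeasure gammaMeasure
  infer_instance

lemma expMeasure_Iic_zero (θ : ℝ) : expMeasure θ (Iic 0) = 0 := by
  rw [← measure_congr Iio_ae_eq_Iic, expMeasure, gammaMeasure,
    withDensity_apply _ measurableSet_Iio]
  exact lintegral_gammaPDF_of_nonpos le_rfl

lemma expMeasure_Ioo_pos {θ : ℝ} (hθ : 0 < θ) {x y : ℝ} (hx : 0 ≤ x) (hxy : x < y) :
    0 < expMeasure θ (Ioo x y) := by
  have hsupp : {z | gammaPDF 1 θ z ≠ 0} ∩ Ioo x y = Ioo x y :=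
    inter_eq_right.2 fun z hz => (ENNReal.ofReal_pos.2
      (gammaPDFReal_pos one_pos hθ (hx.trans_lt hz.1))).ne'
  rw [pos_iff_ne_zero, expMeasure, gammaMeasure, Ne,
    withDensity_apply_eq_zero' (f := gammaPDF 1 θ)
      (measurable_gammaPDFReal 1 θ).ennreal_ofReal.aemeasurable, hsupp, Real.volume_Ioo]
  simpa using hxy

end Exponential

namespace ProbabilityTheory

variable {Ω ι : Type*} [MeasurableSpace Ω] {μ : Measure Ω}

lemma IndepFun.measure_add_eq_const [IsFiniteMeasure μ] {X Y : Ω → ℝ} (hX : AEMeasurable X μ)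
    (hY : AEMeasurable Y μ) (hXY : IndepFun X Y μ) [NullSingletonClass (μ.map Y)] (c : ℝ) :
    μ {ω | X ω + Y ω = c} = 0 := by
  have hline : MeasurableSet {p : ℝ × ℝ | p.1 + p.2 = c} :=
    (measurable_fst.add measurable_snd) (measurableSet_singleton c)
  calc μ {ω | X ω + Y ω = c}
      = μ.map (fun ω => (X ω, Y ω)) {p | p.1 + p.2 = c} :=
        (Measure.map_apply_of_aemeasurable (hX.prodMk hY) hline).symm
    _ = ((μ.map X).prod (μ.map Y)) {p | p.1 + p.2 = c} := by
        rw [hXY.map_prod_eq_prod_map_map hX hY]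
    _ = ∫⁻ x, μ.map Y {c - x} ∂(μ.map X) := by
        rw [Measure.prod_apply hline]
        congr! with x
        ext y
        simp [eq_sub_iff_add_eq']
    _ = 0 := by simp

lemma iIndepFun.measure_sum_eq_const [IsProbabilityMeasure μ] {X : ι → Ω → ℝ}
    (hX : iIndepFun X μ) (hmeas : ∀ i, Measurable (X i))
    (hatom : ∀ i, NullSingletonClass (μ.map (X i))) {s : Finset ι} (hs : s.Nonempty) (c : ℝ) :
    μ {ω | ∑ i ∈ s, X i ω = c} = 0 := by
  classical
  obtain ⟨j, hj⟩ := hs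
  have hsplit : {ω | ∑ i ∈ s, X i ω = c} = {ω | (∑ i ∈ s.erase j, X i) ω + X j ω = c} := by
    ext ω
    simp only [mem_ofPred_eq, Finset.sum_apply, Finset.sum_erase_add _ _ hj]
  rw [hsplit]
  exact (hX.indepFun_finsetSum_of_notMem hmeas (Finset.notMem_erase j s)).measure_add_eq_const
    (Finset.aemeasurable_sum _ fun i _ => (hmeas i).aemeasurable) (hmeas j).aemeasurable c

end ProbabilityTheory

section Probability

variable {Ω ι : Type*} [MeasurableSpace Ω] {μ : Measure Ω} {b θ : ℝ}

@[fun_prop]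
lemma measurable_logb : Measurable (logb b) := by
  unfold logb
  fun_prop

lemma nullSingletonClass_map_logb (hb₀ : 0 < b) (hb₁ : b ≠ 1) {Y : Ω → ℝ} (hY : Measurable Y)
    [NullSingletonClass (μ.map Y)] : NullSingletonClass (μ.map (logb b ∘ Y)) :=
  ⟨fun t => by
    rw [← Measure.map_map measurable_logb hY,
      Measure.map_apply measurable_logb (measurableSet_singleton t)]
    exact measure_mono_null (logb_preimage_singleton_subset hb₀ hb₁ t)
      ((toFinite _).measure_zero _)⟩

lemma ae_pos_of_map_eq_expMeasure {Y : Ω → ℝ} (hY : Measurable Y)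
    (hlaw : μ.map Y = expMeasure θ) : ∀ᵐ ω ∂μ, 0 < Y ω := by
  refine ae_of_ae_map hY.aemeasurable ?_
  rw [hlaw, ae_iff]
  simp only [not_lt]
  exact expMeasure_Iic_zero θ

variable {H : ι → Ω → ℝ}

lemma measure_iInter_preimage_Ioo_pos (hindep : iIndepFun H μ) (hmeas : ∀ i, Measurable (H i))
    (hlaw : ∀ i, μ.map (H i) = expMeasure θ) (hθ : 0 < θ) (s : Finset ι) {x y : ℝ}
    (hx : 0 ≤ x) (hxy : x < y) : 0 < μ (⋂ i ∈ s, H i ⁻¹' Ioo x y) := by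
  rw [hindep.measure_inter_preimage_eq_mul s (sets := fun _ => Ioo x y)
    fun _ _ => measurableSet_Ioo, pos_iff_ne_zero, Finset.prod_ne_zero_iff]
  intro i _
  rw [← Measure.map_apply (hmeas i) measurableSet_Ioo, hlaw]
  exact (expMeasure_Ioo_pos hθ hx hxy).ne'

lemma measure_sum_logb_le_pos (hb : 1 < b) (hindep : iIndepFun H μ)
    (hmeas : ∀ i, Measurable (H i)) (hlaw : ∀ i, μ.map (H i) = expMeasure θ) (hθ : 0 < θ)
    {s : Finset ι} (hs : s.Nonempty) (c : ℝ) :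
    0 < μ {ω | ∑ i ∈ s, logb b (H i ω) ≤ c} := by
  have hsub : ⋂ i ∈ s, H i ⁻¹' Ioo 0 (b ^ (c / s.card)) ⊆
      {ω | ∑ i ∈ s, logb b (H i ω) ≤ c} := by
    intro ω hω
    simp only [mem_iInter, mem_preimage, mem_Ioo] at hω
    calc ∑ i ∈ s, logb b (H i ω) ≤ ∑ _i ∈ s, c / s.card :=
          Finset.sum_le_sum fun i hi => (logb_le_iff_le_rpow hb (hω i hi).1).2 (hω i hi).2.le
      _ = c := Finset.sum_const_div_card hs c
  exact (measure_iInter_preimage_Ioo_pos hindep hmeas hlaw hθ s le_rfl (by positivity)).trans_le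
    (measure_mono hsub)

lemma measure_sum_logb_le_lt_one [IsProbabilityMeasure μ] (hb : 1 < b)
    (hindep : iIndepFun H μ) (hmeas : ∀ i, Measurable (H i))
    (hlaw : ∀ i, μ.map (H i) = expMeasure θ) (hθ : 0 < θ) {s : Finset ι} (hs : s.Nonempty)
    (c : ℝ) : μ {ω | ∑ i ∈ s, logb b (H i ω) ≤ c} < 1 := by
  set t := b ^ (c / s.card)
  set B := ⋂ i ∈ s, H i ⁻¹' Ioo t (t + 1)
  have hsub : {ω | ∑ i ∈ s, logb b (H i ω) ≤ c} ⊆ Bᶜ := by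
    intro ω hω hωB
    simp only [B, mem_iInter, mem_preimage, mem_Ioo] at hωB
    have hgt : c < ∑ i ∈ s, logb b (H i ω) :=
      calc c = ∑ _i ∈ s, c / s.card := (Finset.sum_const_div_card hs c).symm
        _ < ∑ i ∈ s, logb b (H i ω) := Finset.sum_lt_sum_of_nonempty hs fun i hi =>
            (lt_logb_iff_rpow_lt hb ((hωB i hi).1.trans' (by positivity))).2 (hωB i hi).1
    exact hgt.not_ge hω
  have hB : MeasurableSet B :=
    .biInter s.countable_toSet fun i _ => hmeas i measurableSet_Ioo
  calc μ {ω | ∑ i ∈ s, logb b (H i ω) ≤ c} ≤ μ Bᶜ := measure_mono hsub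
    _ = 1 - μ B := prob_compl_eq_one_sub hB
    _ < 1 := ENNReal.sub_lt_self ENNReal.one_ne_top one_ne_zero
        (measure_iInter_preimage_Ioo_pos hindep hmeas hlaw hθ s (by positivity)
          (lt_add_one t)).ne'

lemma tendsto_measure_sum_logb_one_add_mul_le [IsFiniteMeasure μ]
    (hmeas : ∀ i, Measurable (H i)) (s : Finset ι) (hpos : ∀ i ∈ s, ∀ᵐ ω ∂μ, 0 < H i ω)
    {c : ℝ} (hc : μ {ω | ∑ i ∈ s, logb b (H i ω) = c} = 0) :
    Tendsto (fun x => μ {ω | ∑ i ∈ s, logb b (1 + x * H i ω) ≤ s.card * logb b x + c})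
      atTop (𝓝 (μ {ω | ∑ i ∈ s, logb b (H i ω) ≤ c})) := by
  refine tendsto_measure_of_ae_tendsto_indicator_of_isFiniteMeasure atTop
    (measurableSet_le (by fun_prop) measurable_const)
    (fun x => measurableSet_le (by fun_prop) measurable_const) ?_
  filter_upwards [(eventually_all_finset s).2 hpos, measure_eq_zero_iff_ae_notMem.1 hc]
    with ω hωpos hωc
  exact eventually_sum_logb_one_add_mul_le_iff s hωpos hωc

end Probability

/-- for every positive integer `r` and real `c`,
`P[Σ_{i=1}^r log₂(1+SNR·Hᵢ) ≤ r·log₂(SNR) + c] → P[Σ_{i=1}^r log₂(Hᵢ) ≤ c]` as `SNR → ∞`,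
and the limiting probability is strictly between `0` and `1`. -/
theorem outage_prob_tendsto_shifted_limit
    {Ω : Type*} [MeasurableSpace Ω] (μ : Measure Ω) [IsProbabilityMeasure μ]
    (H : ℕ → Ω → ℝ) (hmeas : ∀ i, Measurable (H i))
    (hindep : iIndepFun H μ)
    (hdist : ∀ i, Measure.map (H i) μ = expMeasure 1)
    (r : ℕ) (hr : 1 ≤ r) (c : ℝ) :
    Tendsto
      (fun snr : ℝ =>
        (μ {ω | ∑ i ∈ Finset.range r, Real.logb 2 (1 + snr * H i ω) ≤
            (r : ℝ) * Real.logb 2 snr + c}).toReal)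
      atTop
      (𝓝 ((μ {ω | ∑ i ∈ Finset.range r, Real.logb 2 (H i ω) ≤ c}).toReal)) ∧
    0 < (μ {ω | ∑ i ∈ Finset.range r, Real.logb 2 (H i ω) ≤ c}).toReal ∧
    (μ {ω | ∑ i ∈ Finset.range r, Real.logb 2 (H i ω) ≤ c}).toReal < 1 := by
  have hne : (Finset.range r).Nonempty := Finset.nonempty_range_iff.2 (by omega)
  have hatomH (i : ℕ) : NullSingletonClass (μ.map (H i)) := by
    rw [hdist i]
    infer_instance
  have hatom : μ {ω | ∑ i ∈ Finset.range r, logb 2 (H i ω) = c} = 0 :=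
    (hindep.comp (fun _ => logb 2) fun _ => measurable_logb).measure_sum_eq_const
      (fun i => measurable_logb.comp (hmeas i))
      (fun i => nullSingletonClass_map_logb two_pos (by norm_num) (hmeas i)) hne c
  have hlim := tendsto_measure_sum_logb_one_add_mul_le hmeas (Finset.range r)
    (fun i _ => ae_pos_of_map_eq_expMeasure (hmeas i) (hdist i)) hatom
  rw [Finset.card_range] at hlim
  refine ⟨(ENNReal.tendsto_toReal (measure_ne_top _ _)).comp hlim,
    ENNReal.toReal_pos (measure_sum_logb_le_pos one_lt_two hindep hmeas hdist one_pos hne c).ne'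
      (measure_ne_top _ _), ?_⟩
  simpa using (ENNReal.toReal_lt_toReal (measure_ne_top _ _) ENNReal.one_ne_top).2
    (measure_sum_logb_le_lt_one one_lt_two hindep hmeas hdist one_pos hne c)
end
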